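/- (Cocommutative bialgebra solves the Pachner (3,3)-relation.) Let V be a cocommutative bialgebra over a field k, with multiplication ∇ : V ⊗ V → V and comultiplication Δ : V → V ⊗ V satisfying σ ∘ Δ = Δ. Define Q = (id_V ⊗ ∇ ⊗ id_V) ∘ (Δ ⊗ Δ) : V ⊗ V → V^{⊗3}. Then Q satisfies the Pachner (3,3)-relation: (Q∘σ ⊗ id_V^{⊗3}) ∘ (id_V ⊗ Q ⊗ id_V) ∘ (σ ⊗ id_V^{⊗2}) ∘ (id_V ⊗ Q) = (id_V^{⊗2} ⊗ σ ⊗ id_V^{⊗2}) ∘ (id_V^{⊗3} ⊗ (Q∘σ)) ∘ (id_V ⊗ Q ⊗ id_V) ∘ (id_V^{⊗2} ⊗ σ) ∘ (Q ⊗ id_V), an equality of linear maps V^{⊗3} → V^{⊗6}. -/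

import Mathlib

/-!
Evaluated on `x ⊗ y ⊗ z`, both sides expand (using `Δ (a * b) = Δ a * Δ b`) into sums of pure
six-fold tensors whose slots are products of Sweedler components of `x`, `y`, `z`, always in
this order. Such a tensor factors in the algebra `V^{⊗6}` as `X * Y * Z`, where `X`, `Y`, `Z`
carry the components of `x`, `y`, `z` alone; summing, each side becomes
`placeX (Δ³ x) * placeY (Δ⁴ y) * placeZ (Δ³ z)` for iterated coproducts bracketed differently
on the two sides. Coassociativity identifies the factors of `x` and `z`. For `y`, the left side
carries `(Δ ⊗ Δ) (Δ y)` and the right side `Δ_{V ⊗ V} (Δ y) = (id ⊗ σ ⊗ id) ((Δ ⊗ Δ) (Δ y))`;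
they agree because for a cocommutative coalgebra `Δ` is a coalgebra morphism.
-/

open TensorProduct

noncomputable section

namespace Pachner33Cocomm

variable {k V : Type*} [Field k] [Ring V] [Bialgebra k V]

/-- The flip `σ : V ⊗ V → V ⊗ V`, `x ⊗ y ↦ y ⊗ x`. -/
def flip : V ⊗[k] V →ₗ[k] V ⊗[k] V := (TensorProduct.comm k V V).toLinearMap

/-- For a map `P : V ⊗ V → V^{⊗3}`, the map `P ⊗ id_W` acting on the first two
factors of a right-nested tensor product `V ⊗ (V ⊗ W)` (the appropriate
associativity isomorphisms being inserted). -/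
def front (W : Type*) [AddCommGroup W] [Module k W]
    (P : V ⊗[k] V →ₗ[k] V ⊗[k] (V ⊗[k] V)) :
    V ⊗[k] (V ⊗[k] W) →ₗ[k] V ⊗[k] (V ⊗[k] (V ⊗[k] W)) :=
  (TensorProduct.map LinearMap.id (TensorProduct.assoc k V V W).toLinearMap) ∘ₗ
    (TensorProduct.assoc k V (V ⊗[k] V) W).toLinearMap ∘ₗ
      (TensorProduct.map P LinearMap.id) ∘ₗ
        (TensorProduct.assoc k V V W).symm.toLinearMap

/-- The map `Q = (id ⊗ ∇ ⊗ id) ∘ (Δ ⊗ Δ) : V ⊗ V → V^{⊗3}` built from the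
multiplication and the comultiplication of a bialgebra. -/
def Qmap : V ⊗[k] V →ₗ[k] V ⊗[k] (V ⊗[k] V) :=
  TensorProduct.map LinearMap.id (TensorProduct.map (LinearMap.mul' k V) LinearMap.id) ∘ₗ
    TensorProduct.map LinearMap.id (TensorProduct.assoc k V V V).symm.toLinearMap ∘ₗ
      (TensorProduct.assoc k V V (V ⊗[k] V)).toLinearMap ∘ₗ
        TensorProduct.map Coalgebra.comul Coalgebra.comul

open Coalgebra

local notation "V⁴" => V ⊗[k] (V ⊗[k] (V ⊗[k] V))
local notation "V⁵" => V ⊗[k] V⁴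
local notation "V⁶" => V ⊗[k] V⁵

-- Instance search does not find the ring structure of tensor powers beyond the fourth.
instance : Ring V⁵ := @Algebra.TensorProduct.instRing k V V⁴ _ _ _ _ _
instance : Algebra k V⁵ := @Algebra.TensorProduct.instAlgebra k V V⁴ _ _ _ _ _

def pachnerLeft : V ⊗[k] (V ⊗[k] V) →ₗ[k] V⁶ :=
  front (V ⊗[k] (V ⊗[k] V)) ((Qmap : V ⊗[k] V →ₗ[k] V ⊗[k] (V ⊗[k] V)) ∘ₗ flip) ∘ₗ
    TensorProduct.map LinearMap.id (front V Qmap) ∘ₗ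
      (TensorProduct.leftComm k V V (V ⊗[k] V)).toLinearMap ∘ₗ
        TensorProduct.map LinearMap.id Qmap

def pachnerRight : V ⊗[k] (V ⊗[k] V) →ₗ[k] V⁶ :=
  TensorProduct.map LinearMap.id
      (TensorProduct.map LinearMap.id (TensorProduct.leftComm k V V (V ⊗[k] V)).toLinearMap) ∘ₗ
    TensorProduct.map LinearMap.id
        (TensorProduct.map LinearMap.id (TensorProduct.map LinearMap.id (Qmap ∘ₗ flip))) ∘ₗ
      TensorProduct.map LinearMap.id (front V Qmap) ∘ₗ
        TensorProduct.map LinearMap.id (TensorProduct.map LinearMap.id flip) ∘ₗ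
          front V Qmap

section Placements

variable (k V)

/-- `a ⊗ b ⊗ c ↦ a ⊗ b ⊗ 1 ⊗ c ⊗ 1 ⊗ 1` -/
def placeX : V ⊗[k] (V ⊗[k] V) →ₗ[k] V⁶ :=
  map LinearMap.id
    (map LinearMap.id (mk k V (V ⊗[k] (V ⊗[k] V)) 1 ∘ₗ (mk k V (V ⊗[k] V)).flip (1 ⊗ₜ 1)))

/-- `(a ⊗ b) ⊗ (c ⊗ d) ↦ 1 ⊗ a ⊗ b ⊗ c ⊗ d ⊗ 1` -/
def placeY : (V ⊗[k] V) ⊗[k] (V ⊗[k] V) →ₗ[k] V⁶ :=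
  mk k V V⁵ 1 ∘ₗ (TensorProduct.assoc k V V (V ⊗[k] (V ⊗[k] V))).toLinearMap ∘ₗ
    map LinearMap.id (map LinearMap.id ((mk k V V).flip 1))

/-- `a ⊗ b ⊗ c ↦ 1 ⊗ 1 ⊗ 1 ⊗ a ⊗ b ⊗ c` -/
def placeZ : V ⊗[k] (V ⊗[k] V) →ₗ[k] V⁶ :=
  mk k V V⁵ 1 ∘ₗ mk k V V⁴ 1 ∘ₗ mk k V (V ⊗[k] (V ⊗[k] V)) 1

end Placements

lemma tmul_six_eq_placeX_mul_placeY_mul_placeZ (a b c d e f g h i j : V) :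
    a ⊗ₜ[k] ((b * c) ⊗ₜ[k] (d ⊗ₜ[k] ((e * (f * g)) ⊗ₜ[k] ((h * i) ⊗ₜ[k] j)))) =
      placeX k V (a ⊗ₜ (b ⊗ₜ e)) * placeY k V ((c ⊗ₜ d) ⊗ₜ (f ⊗ₜ h)) *
        placeZ k V (g ⊗ₜ (i ⊗ₜ j)) := by
  simp [placeX, placeY, placeZ, mul_assoc, Algebra.TensorProduct.tmul_mul_tmul,
    Algebra.TensorProduct.tmul_mul_tmul (A := V) (B := V⁴)]

lemma comul_eq_sum_arbitrary {R C : Type*} [CommSemiring R] [AddCommMonoid C] [Module R C]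
    [Coalgebra R C] (c : C) :
    comul (R := R) c = ∑ i ∈ (ℛ R c).index, (ℛ R c).left i ⊗ₜ[R] (ℛ R c).right i :=
  (ℛ R c).eq.symm

lemma pachnerLeft_tmul (x y z : V) :
    pachnerLeft (x ⊗ₜ[k] (y ⊗ₜ[k] z)) =
      placeX k V (TensorProduct.assoc k V V V (comul.rTensor V (comul x))) *
        placeY k V (map comul comul (comul y)) *
        placeZ k V (TensorProduct.assoc k V V V (comul.rTensor V (comul z))) := by
  -- `↓` splits `Δ (a * b)` into `Δ a * Δ b` before it could be expanded as a single coproduct.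
  simp only [pachnerLeft, LinearMap.comp_apply, front, Qmap, flip, map_tmul, LinearMap.id_coe,
    id_eq, LinearEquiv.coe_coe, ↓Bialgebra.comul_mul, comul_eq_sum_arbitrary, Finset.sum_mul_sum,
    Algebra.TensorProduct.tmul_mul_tmul, tmul_sum, sum_tmul, map_sum, assoc_tmul, assoc_symm_tmul,
    leftComm_tmul, comm_tmul, LinearMap.mul'_apply, LinearMap.rTensor_tmul]
  simp only [tmul_six_eq_placeX_mul_placeY_mul_placeZ, ← Finset.sum_mul, ← Finset.mul_sum]

lemma pachnerRight_tmul (x y z : V) :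
    pachnerRight (x ⊗ₜ[k] (y ⊗ₜ[k] z)) =
      placeX k V (comul.lTensor V (comul x)) *
        placeY k V (comul (R := k) (comul y)) *
        placeZ k V (comul.lTensor V (comul z)) := by
  -- `(C := V)` keeps the outer coproduct of `V ⊗ V` for `comul_tmul`.
  simp only [pachnerRight, LinearMap.comp_apply, front, Qmap, flip, map_tmul, LinearMap.id_coe,
    id_eq, LinearEquiv.coe_coe, ↓Bialgebra.comul_mul, comul_eq_sum_arbitrary (C := V),
    Finset.sum_mul_sum, Algebra.TensorProduct.tmul_mul_tmul, tmul_sum, sum_tmul, map_sum,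
    assoc_tmul, assoc_symm_tmul, leftComm_tmul, comm_tmul, LinearMap.mul'_apply, mul_assoc,
    LinearMap.lTensor_tmul, TensorProduct.comul_tmul,
    AlgebraTensorModule.tensorTensorTensorComm_tmul]
  simp only [tmul_six_eq_placeX_mul_placeY_mul_placeZ, ← Finset.sum_mul, ← Finset.mul_sum]
  congr 2
  exact Finset.sum_congr rfl fun _ _ => Finset.sum_comm

lemma comul_comul_of_isCocomm {R C : Type*} [CommSemiring R] [AddCommMonoid C] [Module R C]
    [Coalgebra R C] [IsCocomm R C] (c : C) :
    comul (R := R) (comul (R := R) c) = map comul comul (comul c) :=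
  (CoalgHomClass.map_comp_comul_apply (comulCoalgHom R C) c).symm

/-- A cocommutative bialgebra solves the Pachner (3,3)-relation via
`Q = (id ⊗ ∇ ⊗ id) ∘ (Δ ⊗ Δ)`. -/
theorem pachner33_of_cocommutative_bialgebra
    (hcocomm : flip ∘ₗ (Coalgebra.comul : V →ₗ[k] V ⊗[k] V) = Coalgebra.comul) :
    front (V ⊗[k] (V ⊗[k] V)) ((Qmap : V ⊗[k] V →ₗ[k] V ⊗[k] (V ⊗[k] V)) ∘ₗ flip) ∘ₗ
        TensorProduct.map LinearMap.id (front V Qmap) ∘ₗ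
          (TensorProduct.leftComm k V V (V ⊗[k] V)).toLinearMap ∘ₗ
            TensorProduct.map LinearMap.id Qmap
      = TensorProduct.map LinearMap.id
            (TensorProduct.map LinearMap.id (TensorProduct.leftComm k V V (V ⊗[k] V)).toLinearMap) ∘ₗ
          TensorProduct.map LinearMap.id
              (TensorProduct.map LinearMap.id (TensorProduct.map LinearMap.id (Qmap ∘ₗ flip))) ∘ₗ
            TensorProduct.map LinearMap.id (front V Qmap) ∘ₗ
              TensorProduct.map LinearMap.id (TensorProduct.map LinearMap.id flip) ∘ₗ
                front V Qmap := by
  have : IsCocomm k V := ⟨hcocomm⟩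
  change pachnerLeft = pachnerRight
  refine ext_threefold' fun x y z => ?_
  rw [pachnerLeft_tmul, pachnerRight_tmul, coassoc_apply, coassoc_apply, comul_comul_of_isCocomm]

end Pachner33Cocomm
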